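/- arXiv:1406.4329 — 2 statements merged into one kernel-verified Lean document; each statement's English description precedes it below -/
import Mathlib

section
/- Let (Eₙ)_{n≥1} be a sequence of events on a probability space with complements Ēₙ, and suppose ∑_{n≥1} P(Eₙ | Ē₁ ∩ ... ∩ Ē_{n−1}) = ∞ (with the conditional probability interpreted as 1 if P(Ē₁ ∩ ... ∩ Ē_{n−1}) = 0). Then P(⋃ₙ Eₙ) = 1. -/
/-!
Writing `Aₙ = Ē₀ ∩ ⋯ ∩ Ēₙ₋₁` and `qₙ = P(Eₙ | Aₙ)`, one has `P(Aₙ₊₁) = P(Aₙ)(1 - qₙ)`, so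
`P(A_N) = ∏_{n<N} (1 - qₙ) ≤ exp(-∑_{n<N} qₙ) → 0`. Since `(⋃ₙ Eₙ)ᶜ ⊆ A_N` for every `N`,
the union has full probability.
-/

open MeasureTheory Filter Finset Topology
open scoped ENNReal

theorem Real.prod_one_sub_le_exp_neg_sum {ι : Type*} (s : Finset ι) {p : ι → ℝ}
    (hp : ∀ i ∈ s, p i ≤ 1) : ∏ i ∈ s, (1 - p i) ≤ Real.exp (-∑ i ∈ s, p i) := by
  rw [← sum_neg_distrib, Real.exp_sum]
  exact prod_le_prod (fun i hi => sub_nonneg.2 (hp i hi)) fun i _ => Real.one_sub_le_exp_neg _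

theorem Real.tendsto_prod_one_sub_of_not_summable {p : ℕ → ℝ} (hp₀ : ∀ n, 0 ≤ p n)
    (hp₁ : ∀ n, p n ≤ 1) (hp : ¬Summable p) :
    Tendsto (fun N => ∏ n ∈ range N, (1 - p n)) atTop (𝓝 0) := by
  have h_sum : Tendsto (fun N => ∑ n ∈ range N, p n) atTop atTop :=
    (not_summable_iff_tendsto_nat_atTop_of_nonneg hp₀).1 hp
  refine squeeze_zero (fun N => prod_nonneg fun n _ => sub_nonneg.2 (hp₁ n))
    (fun N => Real.prod_one_sub_le_exp_neg_sum _ fun n _ => hp₁ n) ?_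
  exact Real.tendsto_exp_atBot.comp (tendsto_neg_atTop_atBot.comp h_sum)

theorem ENNReal.tendsto_prod_one_sub_of_tsum_eq_top {q : ℕ → ℝ≥0∞} (hq₁ : ∀ n, q n ≤ 1)
    (hq : ∑' n, q n = ∞) : Tendsto (fun N => ∏ n ∈ range N, (1 - q n)) atTop (𝓝 0) := by
  have hq_ne_top n : q n ≠ ∞ := ne_top_of_le_ne_top one_ne_top (hq₁ n)
  have hq_toReal n : (q n).toReal ≤ 1 := by simpa using toReal_mono one_ne_top (hq₁ n)
  have h_not_summable : ¬Summable fun n => (q n).toReal := fun h => by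
    refine ofReal_ne_top (r := ∑' n, (q n).toReal) ?_
    rw [ENNReal.ofReal_tsum_of_nonneg (fun _ => toReal_nonneg) h, ← hq]
    exact tsum_congr fun n => ofReal_toReal (hq_ne_top n)
  have h_prod N : ∏ n ∈ range N, (1 - q n) =
      ENNReal.ofReal (∏ n ∈ range N, (1 - (q n).toReal)) := by
    rw [ENNReal.ofReal_prod_of_nonneg fun n _ => sub_nonneg.2 (hq_toReal n)]
    refine prod_congr rfl fun n _ => ?_
    rw [ENNReal.ofReal_sub _ toReal_nonneg, ofReal_one, ofReal_toReal (hq_ne_top n)]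
  simpa [h_prod] using ENNReal.tendsto_ofReal <|
    Real.tendsto_prod_one_sub_of_not_summable (fun _ => toReal_nonneg) hq_toReal h_not_summable

section AvoidingEvents

variable {Ω : Type*}

def noneBefore (E : ℕ → Set Ω) (n : ℕ) : Set Ω := ⋂ i < n, (E i)ᶜ

variable {E : ℕ → Set Ω}

theorem noneBefore_zero : noneBefore E 0 = Set.univ := by simp [noneBefore]

theorem noneBefore_succ (n : ℕ) : noneBefore E (n + 1) = noneBefore E n \ E n :=
  Set.biInter_lt_succ _ n

theorem compl_iUnion_subset_noneBefore (n : ℕ) : (⋃ i, E i)ᶜ ⊆ noneBefore E n := by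
  rw [Set.compl_iUnion]
  exact Set.iInter_mono fun i => Set.subset_iInter fun _ => subset_rfl

variable [MeasurableSpace Ω] (P : Measure Ω)

/-- `P(Eₙ | Ē₀ ∩ ⋯ ∩ Ēₙ₋₁)`, set to `1` when the conditioning event is null: with this
convention `measure_noneBefore_succ` holds without any case distinction. -/
noncomputable def condProbFirstHit (E : ℕ → Set Ω) (n : ℕ) : ℝ≥0∞ :=
  if P (noneBefore E n) = 0 then 1 else P (E n ∩ noneBefore E n) / P (noneBefore E n)

theorem condProbFirstHit_le_one (n : ℕ) : condProbFirstHit P E n ≤ 1 := by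
  unfold condProbFirstHit
  split_ifs
  · exact le_rfl
  · exact ENNReal.div_le_of_le_mul (by simpa using measure_mono Set.inter_subset_right)

variable [IsFiniteMeasure P]

theorem measure_noneBefore_succ {n : ℕ} (hE : MeasurableSet (E n)) :
    P (noneBefore E (n + 1)) = P (noneBefore E n) * (1 - condProbFirstHit P E n) := by
  by_cases h₀ : P (noneBefore E n) = 0
  · rw [h₀, zero_mul, noneBefore_succ]
    exact measure_mono_null Set.sdiff_subset h₀
  rw [condProbFirstHit, if_neg h₀, ENNReal.mul_sub fun _ _ => measure_ne_top P _, mul_one,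
    ENNReal.mul_div_cancel h₀ (measure_ne_top P _), noneBefore_succ,
    ← measure_inter_add_sdiff (noneBefore E n) hE, Set.inter_comm,
    ENNReal.add_sub_cancel_left (measure_ne_top P _)]

theorem measure_noneBefore_eq_prod (hE : ∀ n, MeasurableSet (E n)) (N : ℕ) :
    P (noneBefore E N) = P Set.univ * ∏ n ∈ range N, (1 - condProbFirstHit P E n) := by
  induction N with
  | zero => simp [noneBefore_zero]
  | succ N ih => rw [measure_noneBefore_succ P (hE N), ih, prod_range_succ, mul_assoc]

theorem measure_compl_iUnion_eq_zero_of_tsum_condProbFirstHit_eq_top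
    (hE : ∀ n, MeasurableSet (E n)) (h : ∑' n, condProbFirstHit P E n = ∞) :
    P (⋃ n, E n)ᶜ = 0 := by
  have h_tendsto : Tendsto (fun N => P (noneBefore E N)) atTop (𝓝 0) := by
    simp_rw [measure_noneBefore_eq_prod P hE]
    simpa using ENNReal.Tendsto.const_mul (ENNReal.tendsto_prod_one_sub_of_tsum_eq_top
      (condProbFirstHit_le_one P) h) (Or.inr (measure_ne_top P _))
  exact le_antisymm
    (ge_of_tendsto' h_tendsto fun N => measure_mono (compl_iUnion_subset_noneBefore N)) bot_le

end AvoidingEvents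

theorem stmt_3 {Ω : Type*} [MeasurableSpace Ω] (P : Measure Ω) [IsProbabilityMeasure P]
    (E : ℕ → Set Ω) (hE : ∀ n, MeasurableSet (E n))
    (hdiv : ∑' n : ℕ,
        (if P (⋂ i < n, (E i)ᶜ) = 0 then 1
         else P (E n ∩ ⋂ i < n, (E i)ᶜ) / P (⋂ i < n, (E i)ᶜ)) = ⊤) :
    P (⋃ n, E n) = 1 :=
  (prob_compl_eq_zero_iff (MeasurableSet.iUnion hE)).1
    (measure_compl_iUnion_eq_zero_of_tsum_condProbFirstHit_eq_top P hE hdiv)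
end

section
/- Let k̄ be an ℕ-valued random variable and (z_n) a nondecreasing sequence of nonnegative random variables, and suppose there are constants q ∈ (0,1), γ > 0, K₁, K₂ ≥ 1, v ≥ 0 with P(k̄ > k) ≤ q^k and E[e^{γ z_k}] ≤ K₁^k K₂^{k}(1 + v) for all k. If α ∈ (0, γ) satisfies q^{1 − α/γ} (K₁ K₂)^{α/γ} < 1, then E[e^{α z_{k̄}}] ≤ C₃ (1 + v) for some constant C₃ depending only on q, γ, α, K₁, K₂. (The key estimate is E[e^{α z_{k̄}} 1_{k̄ = k}] ≤ P(k̄ > k−1)^{1 − α/γ} (E[e^{γ z_k}])^{α/γ} by Hölder's inequality, summable by the assumed inequality.) -/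
/-!
Split `Ω` according to the value of `kbar`. On `{kbar = k}`, Hölder's inequality with exponents
`γ/(γ-α)` and `γ/α` bounds `E[e^{α z_k}; kbar = k]` by
`P(kbar = k)^{1-α/γ} E[e^{γ z_k}]^{α/γ} ≤ q^{(k-1)(1-α/γ)} ((K₁K₂)^k (1+v))^{α/γ}`,
i.e. by `q^{α/γ-1} (1+v) r^k` with `r = q^{1-α/γ} (K₁K₂)^{α/γ} < 1`. Summing the geometric series
gives `C₃ = q^{α/γ-1} / (1 - r)`.
-/

open MeasureTheory
open scoped ENNReal

theorem interpolated_bound_le_geometric {q K v θ : ℝ} (hq : 0 < q) (hK : 0 ≤ K) (hv : 0 ≤ v)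
    (hθ1 : θ ≤ 1) (k : ℕ) :
    (q ^ k / q) ^ (1 - θ) * (K ^ k * (1 + v)) ^ θ
      ≤ q ^ (θ - 1) * (1 + v) * (q ^ (1 - θ) * K ^ θ) ^ k := by
  have hsplit : (q ^ k / q) ^ (1 - θ) * (K ^ k) ^ θ = q ^ (θ - 1) * (q ^ (1 - θ) * K ^ θ) ^ k := by
    rw [Real.div_rpow (by positivity) hq.le, mul_pow, Real.rpow_pow_comm hq.le,
      Real.rpow_pow_comm hK, div_eq_mul_inv, ← Real.rpow_neg hq.le, neg_sub]
    ring
  calc _ = q ^ (θ - 1) * (q ^ (1 - θ) * K ^ θ) ^ k * (1 + v) ^ θ := by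
        rw [Real.mul_rpow (by positivity) (by positivity), ← mul_assoc, hsplit]
    _ ≤ q ^ (θ - 1) * (q ^ (1 - θ) * K ^ θ) ^ k * (1 + v) := by
        gcongr
        exact Real.rpow_le_self_of_one_le (by linarith) hθ1
    _ = _ := by ring

theorem ENNReal.tsum_ofReal_mul_geometric {c r : ℝ} (hc : 0 ≤ c) (hr0 : 0 ≤ r) (hr1 : r < 1) :
    ∑' k : ℕ, ENNReal.ofReal (c * r ^ k) = ENNReal.ofReal (c * (1 - r)⁻¹) := by
  rw [← ENNReal.ofReal_tsum_of_nonneg (fun k => by positivity)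
    ((summable_geometric_of_lt_one hr0 hr1).mul_left c), tsum_mul_left,
    tsum_geometric_of_lt_one hr0 hr1]

theorem ENNReal.ofReal_exp_mul_rpow_div {γ : ℝ} (hγ : γ ≠ 0) (α x : ℝ) :
    ENNReal.ofReal (Real.exp (γ * x)) ^ (α / γ) = ENNReal.ofReal (Real.exp (α * x)) := by
  rw [ENNReal.ofReal_rpow_of_pos (Real.exp_pos _), ← Real.exp_mul]
  congr 2
  field_simp

namespace MeasureTheory

variable {Ω : Type*} [MeasurableSpace Ω] {μ : Measure Ω}

theorem setLIntegral_rpow_le_measure_rpow_mul_lintegral_rpow {f : Ω → ℝ≥0∞}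
    (hf : AEMeasurable f μ) (s : Set Ω) {θ : ℝ} (hθ0 : 0 < θ) (hθ1 : θ < 1) :
    ∫⁻ ω in s, f ω ^ θ ∂μ ≤ μ s ^ (1 - θ) * (∫⁻ ω, f ω ∂μ) ^ θ := by
  have holder := ENNReal.lintegral_mul_le_Lp_mul_Lq (μ.restrict s)
    (Real.HolderConjugate.one_sub_inv_inv hθ0 hθ1) aemeasurable_const
    (hf.restrict.pow_const θ) (f := fun _ => 1)
  simp only [Pi.mul_apply, one_mul, ENNReal.one_rpow, lintegral_const, one_div, inv_inv,
    Measure.restrict_apply_univ, ← ENNReal.rpow_mul, mul_inv_cancel₀ hθ0.ne',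
    ENNReal.rpow_one] at holder
  exact holder.trans (by gcongr; exact Measure.restrict_le_self)

theorem lintegral_comp_eq_tsum_setLIntegral {ι : Type*} [Countable ι] [MeasurableSpace ι]
    [MeasurableSingletonClass ι] {N : Ω → ι} (hN : Measurable N) (F : ι → Ω → ℝ≥0∞) :
    ∫⁻ ω, F (N ω) ω ∂μ = ∑' i, ∫⁻ ω in N ⁻¹' {i}, F i ω ∂μ := by
  have hcover : (⋃ i, N ⁻¹' {i}) = Set.univ := Set.iUnion_eq_univ_iff.2 fun ω => ⟨N ω, rfl⟩
  rw [← setLIntegral_univ, ← hcover,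
    lintegral_iUnion (fun i => hN (measurableSet_singleton i)) (pairwise_disjoint_fiber N)]
  refine tsum_congr fun i => setLIntegral_congr_fun (hN (measurableSet_singleton i)) ?_
  rintro ω (hω : N ω = i)
  exact congrArg (F · ω) hω

theorem lintegral_comp_rpow_le_tsum {ι : Type*} [Countable ι] [MeasurableSpace ι]
    [MeasurableSingletonClass ι] {N : Ω → ι} (hN : Measurable N) {F : ι → Ω → ℝ≥0∞}
    (hF : ∀ i, AEMeasurable (F i) μ) {θ : ℝ} (hθ0 : 0 < θ) (hθ1 : θ < 1) :
    ∫⁻ ω, F (N ω) ω ^ θ ∂μ ≤ ∑' i, μ (N ⁻¹' {i}) ^ (1 - θ) * (∫⁻ ω, F i ω ∂μ) ^ θ := by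
  rw [lintegral_comp_eq_tsum_setLIntegral hN fun i ω => F i ω ^ θ]
  exact ENNReal.tsum_le_tsum fun i =>
    setLIntegral_rpow_le_measure_rpow_mul_lintegral_rpow (hF i) _ hθ0 hθ1

theorem measure_preimage_singleton_le_of_tail_le [IsProbabilityMeasure μ] {N : Ω → ℕ} {q : ℝ}
    (hq0 : 0 < q) (hq1 : q ≤ 1) (htail : ∀ k : ℕ, (μ {ω | k < N ω}).toReal ≤ q ^ k) (k : ℕ) :
    μ (N ⁻¹' {k}) ≤ ENNReal.ofReal (q ^ k / q) := by
  cases k with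
  | zero =>
    refine prob_le_one.trans ?_
    rw [pow_zero, ENNReal.one_le_ofReal, one_le_div hq0]
    exact hq1
  | succ k =>
    calc μ (N ⁻¹' {k + 1}) ≤ μ {ω | k < N ω} :=
          measure_mono fun ω (hω : N ω = k + 1) => by simp [hω]
      _ ≤ ENNReal.ofReal (q ^ k) :=
          (ENNReal.le_ofReal_iff_toReal_le (measure_ne_top _ _) (by positivity)).2 (htail k)
      _ = ENNReal.ofReal (q ^ (k + 1) / q) := by rw [pow_succ, mul_div_cancel_right₀ _ hq0.ne']

theorem measure_rpow_mul_lintegral_rpow_le [IsProbabilityMeasure μ] {N : Ω → ℕ} {g : Ω → ℝ} {q K v θ : ℝ} (hq0 : 0 < q) (hq1 : q ≤ 1)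
    (hK : 0 ≤ K) (hv : 0 ≤ v) (hθ0 : 0 ≤ θ) (hθ1 : θ ≤ 1)
    (htail : ∀ k : ℕ, (μ {ω | k < N ω}).toReal ≤ q ^ k) (hg : Integrable g μ) (hg0 : 0 ≤ g)
    {k : ℕ} (hmoment : ∫ ω, g ω ∂μ ≤ K ^ k * (1 + v)) :
    μ (N ⁻¹' {k}) ^ (1 - θ) * (∫⁻ ω, ENNReal.ofReal (g ω) ∂μ) ^ θ
      ≤ ENNReal.ofReal (q ^ (θ - 1) * (1 + v) * (q ^ (1 - θ) * K ^ θ) ^ k) := by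
  rw [← ofReal_integral_eq_lintegral_ofReal hg (ae_of_all _ hg0)]
  calc _ ≤ ENNReal.ofReal (q ^ k / q) ^ (1 - θ) * ENNReal.ofReal (K ^ k * (1 + v)) ^ θ := by
        gcongr
        exact measure_preimage_singleton_le_of_tail_le hq0 hq1 htail k
    _ = ENNReal.ofReal ((q ^ k / q) ^ (1 - θ) * (K ^ k * (1 + v)) ^ θ) := by
        rw [ENNReal.ofReal_rpow_of_nonneg (by positivity) (by linarith),
          ENNReal.ofReal_rpow_of_nonneg (by positivity) hθ0, ENNReal.ofReal_mul (by positivity)]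
    _ ≤ _ := ENNReal.ofReal_le_ofReal (interpolated_bound_le_geometric hq0 hK hv hθ1 k)

end MeasureTheory

open Real in
theorem stmt_10 (q γ α K₁ K₂ : ℝ) (hq0 : 0 < q) (hq1 : q < 1) (hγ : 0 < γ)
    (hα0 : 0 < α) (hαγ : α < γ) (hK₁ : 1 ≤ K₁) (hK₂ : 1 ≤ K₂)
    (hgeom : q ^ (1 - α/γ) * (K₁ * K₂) ^ (α/γ) < 1) :
    ∃ C₃ : ℝ, 0 < C₃ ∧
      ∀ (Ω : Type) (m : MeasurableSpace Ω) (P : Measure Ω), IsProbabilityMeasure P →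
      ∀ (kbar : Ω → ℕ) (z : ℕ → Ω → ℝ) (v : ℝ), 0 ≤ v →
        Measurable kbar → (∀ k, Measurable (z k)) →
        (∀ ω, Monotone fun k => z k ω) → (∀ k ω, 0 ≤ z k ω) →
        (∀ k : ℕ, (P {ω | k < kbar ω}).toReal ≤ q ^ k) →
        (∀ k, Integrable (fun ω => Real.exp (γ * z k ω)) P) →
        (∀ k : ℕ, ∫ ω, Real.exp (γ * z k ω) ∂P ≤ K₁ ^ k * K₂ ^ k * (1 + v)) →
        ∫ ω, Real.exp (α * z (kbar ω) ω) ∂P ≤ C₃ * (1 + v) := by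
  set θ := α / γ
  have hθ0 : 0 < θ := div_pos hα0 hγ
  have hθ1 : θ < 1 := (div_lt_one hγ).2 hαγ
  have hK : 0 ≤ K₁ * K₂ := by positivity
  set r := q ^ (1 - θ) * (K₁ * K₂) ^ θ
  have hr0 : 0 ≤ r := by positivity
  refine ⟨q ^ (θ - 1) * (1 - r)⁻¹, by have := sub_pos.2 hgeom; positivity, ?_⟩
  intro Ω _ P _ kbar z v hv hkbar hz _ _ htail hint hmoment
  have hzbar : Measurable fun ω => z (kbar ω) ω :=
    (measurable_from_prod_countable_left (f := fun p : Ω × ℕ => z p.2 p.1) hz).comp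
      (measurable_id.prodMk hkbar)
  have hholder := lintegral_comp_rpow_le_tsum (μ := P) hkbar
    (fun k => ((hz k).const_mul γ).exp.ennreal_ofReal.aemeasurable) hθ0 hθ1
  have hslice k := measure_rpow_mul_lintegral_rpow_le hq0 hq1.le hK hv hθ0.le hθ1.le htail
    (hint k) (fun ω => (exp_pos _).le) ((mul_pow K₁ K₂ k).symm ▸ hmoment k)
  simp only [θ, ENNReal.ofReal_exp_mul_rpow_div hγ.ne'] at hholder
  rw [integral_eq_lintegral_of_nonneg_ae (ae_of_all _ fun ω => (exp_pos _).le)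
    (hzbar.const_mul α).exp.aestronglyMeasurable]
  refine ENNReal.toReal_le_of_le_ofReal (by positivity) ?_
  calc _ ≤ _ := hholder
    _ ≤ _ := ENNReal.tsum_le_tsum hslice
    _ = _ := by rw [ENNReal.tsum_ofReal_mul_geometric (by positivity) hr0 hgeom, mul_right_comm]
end
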